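/- arXiv:1808.10151 — 5 statements merged into one kernel-verified Lean document; each statement's English description precedes it below -/
import Mathlib

section
/- Let $\ell \geq 1$ and let $x, y < 2^{\ell}$ be natural numbers with binary representations $x = x_{\ell-1}\cdots x_0$ and $y = y_{\ell-1}\cdots y_0$ (so $x_i, y_i \in \{0,1\}$ is the $i$-th bit, embedded into $\mathbb{Z}/2\mathbb{Z}$). For each $i$ with $0 \le i < \ell$, define in $\mathbb{Z}/2\mathbb{Z}$: $d_i = y_i(1 - x_i)$, $e_j = x_j + y_j + 1$, and $c_i = d_i \prod_{j=i+1}^{\ell-1} e_j$. Then $c_i = 1$ if and only if ($x_j = y_j$ for all $j$ with $i < j < \ell$) and $x_i = 0$ and $y_i = 1$; i.e., $c_i = 1$ exactly when $i$ is the most significant bit position at which $x$ and $y$ differ and at that position the bit of $y$ exceeds the bit of $x$. -/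
/-- The `i`-th binary digit of a natural number, embedded into `ℤ/2ℤ`. -/
def natBit (n i : ℕ) : ZMod 2 := if n.testBit i then 1 else 0

theorem natBit_add_natBit_add_one (x y j : ℕ) :
    natBit x j + natBit y j + 1 = if x.testBit j = y.testBit j then 1 else 0 := by
  unfold natBit
  cases x.testBit j <;> cases y.testBit j <;> decide

theorem natBit_mul_one_sub_natBit (x y i : ℕ) :
    natBit y i * (1 - natBit x i) =
      if x.testBit i = false ∧ y.testBit i = true then 1 else 0 := by
  unfold natBit
  cases x.testBit i <;> cases y.testBit i <;> decide

theorem secure_comparison_ci_characterization_general (ℓ : ℕ)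
    (x y : ℕ)
    (i : ℕ) :
    (natBit y i * (1 - natBit x i)) *
        (∏ j ∈ Finset.Ico (i + 1) ℓ, (natBit x j + natBit y j + 1)) = 1
      ↔ (∀ j, i < j → j < ℓ → x.testBit j = y.testBit j) ∧
          x.testBit i = false ∧ y.testBit i = true := by
  simp only [natBit_mul_one_sub_natBit, natBit_add_natBit_add_one, Finset.prod_boole,
    ite_zero_mul_ite_zero, mul_one, ite_eq_left_iff, zero_ne_one, imp_false, not_not,
    Finset.mem_Ico, and_imp, Order.add_one_le_iff]
  exact and_comm

/-- In the secure comparison protocol `π_DC`, the value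
`c_i = y_i (1 - x_i) ∏_{j=i+1}^{ℓ-1} (x_j + y_j + 1)` (arithmetic in `ℤ/2ℤ`)
equals `1` iff `i` is the most significant bit position (below `ℓ`) at which
`x` and `y` differ, and there the bit of `y` exceeds the bit of `x`. -/
theorem secure_comparison_ci_characterization (ℓ : ℕ) (hℓ : 1 ≤ ℓ)
    (x y : ℕ) (hx : x < 2 ^ ℓ) (hy : y < 2 ^ ℓ)
    (i : ℕ) (hi : i < ℓ) :
    (natBit y i * (1 - natBit x i)) *
        (∏ j ∈ Finset.Ico (i + 1) ℓ, (natBit x j + natBit y j + 1)) = 1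
      ↔ (∀ j, i < j → j < ℓ → x.testBit j = y.testBit j) ∧
          x.testBit i = false ∧ y.testBit i = true :=
  secure_comparison_ci_characterization_general ℓ x y i
end

section
/- Let $\ell \geq 1$ and let $x, y < 2^{\ell}$ be natural numbers with bits $x_i, y_i \in \mathbb{Z}/2\mathbb{Z}$ for $0 \le i < \ell$. Define $c_i = y_i(1 - x_i)\prod_{j=i+1}^{\ell-1}(x_j + y_j + 1)$ in $\mathbb{Z}/2\mathbb{Z}$. Then: (a) $x < y$ if and only if there exists $i < \ell$ with $c_i = 1$; (b) there is at most one index $i < \ell$ with $c_i = 1$; consequently, if $x \geq y$ then $c_i = 0$ for all $i < \ell$, and if $x < y$ then exactly one $c_i$ equals $1$. -/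
/-- The values `c_i = y_i (1 - x_i) ∏_{j=i+1}^{ℓ-1} (x_j + y_j + 1)` of the
secure comparison protocol `π_DC`. -/
def compC (ℓ x y i : ℕ) : ZMod 2 :=
  natBit y i * (1 - natBit x i) *
    ∏ j ∈ Finset.Ico (i + 1) ℓ, (natBit x j + natBit y j + 1)

namespace Nat

theorem exists_greatest_testBit_ne {x y : ℕ} (h : x ≠ y) :
    ∃ i, x.testBit i ≠ y.testBit i ∧ ∀ j, i < j → x.testBit j = y.testBit j := by
  obtain ⟨i, hi, hgt⟩ := exists_most_significant_bit (mt Nat.xor_eq_zero_iff.1 h)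
  refine ⟨i, ?_, fun j hj => ?_⟩
  · simpa [testBit_xor] using hi
  · simpa [testBit_xor] using hgt j hj

theorem testBit_eq_of_lt_two_pow {ℓ x y j : ℕ} (hx : x < 2 ^ ℓ) (hy : y < 2 ^ ℓ) (hj : ℓ ≤ j) :
    x.testBit j = y.testBit j := by
  have hpow : 2 ^ ℓ ≤ 2 ^ j := Nat.pow_le_pow_right two_pos hj
  rw [testBit_lt_two_pow (hx.trans_le hpow), testBit_lt_two_pow (hy.trans_le hpow)]

end Nat

theorem ZMod.two_eq_one_iff_ne_zero (a : ZMod 2) : a = 1 ↔ a ≠ 0 := by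
  revert a; decide

theorem natBit_ne_zero_iff (n i : ℕ) : natBit n i ≠ 0 ↔ n.testBit i = true := by
  unfold natBit; split_ifs with h <;> simp [h]

theorem one_sub_natBit_ne_zero_iff (n i : ℕ) : 1 - natBit n i ≠ 0 ↔ n.testBit i = false := by
  unfold natBit; split_ifs with h <;> simp [h]

theorem natBit_add_natBit_add_one_ne_zero_iff (x y j : ℕ) :
    natBit x j + natBit y j + 1 ≠ 0 ↔ x.testBit j = y.testBit j := by
  unfold natBit; split_ifs with hx hy hy <;> simp [hx, hy] <;> decide

/-- Over the field `ℤ/2ℤ`, a product is `1` iff no factor vanishes. -/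
theorem compC_eq_one_iff (ℓ x y i : ℕ) :
    compC ℓ x y i = 1 ↔
      y.testBit i = true ∧ x.testBit i = false ∧
        ∀ j, i < j → j < ℓ → x.testBit j = y.testBit j := by
  simp only [compC, ZMod.two_eq_one_iff_ne_zero, mul_ne_zero_iff, Finset.prod_ne_zero_iff,
    natBit_ne_zero_iff, one_sub_natBit_ne_zero_iff, natBit_add_natBit_add_one_ne_zero_iff,
    Finset.mem_Ico, Nat.succ_le_iff, and_imp, and_assoc]

theorem not_lt_of_compC_eq_one {ℓ x y i j : ℕ} (hj : j < ℓ)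
    (hci : compC ℓ x y i = 1) (hcj : compC ℓ x y j = 1) : ¬ i < j := by
  intro hij
  obtain ⟨-, -, hagree⟩ := (compC_eq_one_iff ℓ x y i).1 hci
  obtain ⟨hyj, hxj, -⟩ := (compC_eq_one_iff ℓ x y j).1 hcj
  simp [hagree j hij hj, hyj] at hxj

theorem eq_of_compC_eq_one {ℓ x y i j : ℕ} (hi : i < ℓ) (hj : j < ℓ)
    (hci : compC ℓ x y i = 1) (hcj : compC ℓ x y j = 1) : i = j :=
  le_antisymm (not_lt.1 (not_lt_of_compC_eq_one hi hcj hci))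
    (not_lt.1 (not_lt_of_compC_eq_one hj hci hcj))

section Bounded

variable {ℓ x y : ℕ} (hx : x < 2 ^ ℓ) (hy : y < 2 ^ ℓ)
include hx hy

theorem lt_of_compC_eq_one {i : ℕ} (hc : compC ℓ x y i = 1) : x < y := by
  obtain ⟨hyi, hxi, hagree⟩ := (compC_eq_one_iff ℓ x y i).1 hc
  refine Nat.lt_of_testBit i hxi hyi fun j hij => ?_
  rcases lt_or_ge j ℓ with hjℓ | hjℓ
  · exact hagree j hij hjℓ
  · exact Nat.testBit_eq_of_lt_two_pow hx hy hjℓ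

theorem exists_compC_eq_one (hxy : x < y) : ∃ i, i < ℓ ∧ compC ℓ x y i = 1 := by
  obtain ⟨i, hne, hagree⟩ := Nat.exists_greatest_testBit_ne hxy.ne
  have hiℓ : i < ℓ := not_le.1 fun hiℓ => hne (Nat.testBit_eq_of_lt_two_pow hx hy hiℓ)
  obtain ⟨hxi, hyi⟩ : x.testBit i = false ∧ y.testBit i = true := by
    cases hxb : x.testBit i <;> cases hyb : y.testBit i <;> simp [hxb, hyb] at hne ⊢
    exact hxy.not_gt (Nat.lt_of_testBit i hyb hxb fun j hj => (hagree j hj).symm)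
  exact ⟨i, hiℓ, (compC_eq_one_iff ℓ x y i).2 ⟨hyi, hxi, fun j hj _ => hagree j hj⟩⟩

end Bounded

theorem secure_comparison_ci_properties_general (ℓ : ℕ)
    (x y : ℕ) (hx : x < 2 ^ ℓ) (hy : y < 2 ^ ℓ) :
    (x < y ↔ ∃ i, i < ℓ ∧ compC ℓ x y i = 1) ∧
    (∀ i j, i < ℓ → j < ℓ → compC ℓ x y i = 1 → compC ℓ x y j = 1 → i = j) ∧
    (y ≤ x → ∀ i, i < ℓ → compC ℓ x y i = 0) ∧
    (x < y → ∃! i, i < ℓ ∧ compC ℓ x y i = 1) := by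
  refine ⟨⟨exists_compC_eq_one hx hy, fun ⟨_, _, hc⟩ => lt_of_compC_eq_one hx hy hc⟩,
    fun _ _ hi hj => eq_of_compC_eq_one hi hj, fun hyx i _ => ?_, fun hxy => ?_⟩
  · by_contra hc
    exact hyx.not_gt (lt_of_compC_eq_one hx hy ((ZMod.two_eq_one_iff_ne_zero _).2 hc))
  · obtain ⟨i, hi, hc⟩ := exists_compC_eq_one hx hy hxy
    exact ⟨i, ⟨hi, hc⟩, fun j ⟨hj, hcj⟩ => eq_of_compC_eq_one hj hi hcj hc⟩

/-- Properties of the `c_i` of the secure comparison protocol `π_DC`: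
(a) `x < y` iff some `c_i = 1`; (b) at most one `c_i` equals `1`;
consequently, if `x ≥ y` then all `c_i = 0`, and if `x < y` then exactly one
`c_i` equals `1`. -/
theorem secure_comparison_ci_properties (ℓ : ℕ) (hℓ : 1 ≤ ℓ)
    (x y : ℕ) (hx : x < 2 ^ ℓ) (hy : y < 2 ^ ℓ) :
    (x < y ↔ ∃ i, i < ℓ ∧ compC ℓ x y i = 1) ∧
    (∀ i j, i < ℓ → j < ℓ → compC ℓ x y i = 1 → compC ℓ x y j = 1 → i = j) ∧
    (y ≤ x → ∀ i, i < ℓ → compC ℓ x y i = 0) ∧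
    (x < y → ∃! i, i < ℓ ∧ compC ℓ x y i = 1) :=
  secure_comparison_ci_properties_general ℓ x y hx hy
end

section
/- Let $\ell \geq 1$ and let $a, b < 2^{\ell}$ be natural numbers with bits $a_i, b_i \in \mathbb{Z}/2\mathbb{Z}$ for $0 \le i < \ell$. Define in $\mathbb{Z}/2\mathbb{Z}$: $y_i = a_i + b_i$; $c_0 = a_0 b_0$; for $1 \le i < \ell$, $c_i = (y_i c_{i-1} + 1)(a_i b_i + 1) + 1$; and $x_0 = y_0$, $x_i = y_i + c_{i-1}$ for $1 \le i < \ell$. Then for every $i < \ell$, $x_i$ equals the $i$-th binary digit of $(a + b) \bmod 2^{\ell}$. (This is the correctness of the secure bit-decomposition protocol $\pi_{Decomp}$: the computed bits are exactly the bits of the value $x = a + b \bmod 2^{\ell}$ shared by Alice and Bob.) -/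
/-- The carries of the bit-decomposition protocol `π_Decomp` applied to the
natural numbers `a` and `b`: `c_0 = a_0 b_0` and
`c_i = ((a_i + b_i) c_{i-1} + 1)(a_i b_i + 1) + 1` (arithmetic in `ℤ/2ℤ`). -/
def decompCarry (a b : ℕ) : ℕ → ZMod 2
  | 0 => natBit a 0 * natBit b 0
  | i + 1 =>
      ((natBit a (i + 1) + natBit b (i + 1)) * decompCarry a b i + 1) *
          (natBit a (i + 1) * natBit b (i + 1) + 1) + 1

/-- The output bits of the bit-decomposition protocol `π_Decomp`:
`x_0 = a_0 + b_0` and `x_i = a_i + b_i + c_{i-1}` (arithmetic in `ℤ/2ℤ`). -/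
def decompBit (a b : ℕ) : ℕ → ZMod 2
  | 0 => natBit a 0 + natBit b 0
  | i + 1 => natBit a (i + 1) + natBit b (i + 1) + decompCarry a b i

/-!
`π_Decomp` is a ripple-carry adder written in `ℤ/2ℤ`: sums of bits are XORs, and the recurrence
for `c_i` computes the majority of `a_i`, `b_i`, `c_{i-1}`, which is the carry out of position `i`.
So `x_i` agrees with bit `i` of the width-`ℓ` bit-vector sum of `a` and `b`, i.e. with bit `i` of
`(a + b) mod 2^ℓ`, by the bit-blasting description `BitVec.getLsbD_add` of addition.
-/

def Bool.toZMod2 (p : Bool) : ZMod 2 := if p then 1 else 0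

namespace Bool

theorem toZMod2_false : false.toZMod2 = 0 := rfl

theorem toZMod2_and (p q : Bool) : (p && q).toZMod2 = p.toZMod2 * q.toZMod2 := by
  cases p <;> cases q <;> decide

theorem toZMod2_xor (p q : Bool) : (p ^^ q).toZMod2 = p.toZMod2 + q.toZMod2 := by
  cases p <;> cases q <;> decide

/-- The majority is `pq ∨ (p + q)r`, a disjunction of two exclusive terms, and over `ℤ/2ℤ`
`u ∨ v = (u + 1)(v + 1) + 1`. -/
theorem toZMod2_atLeastTwo (p q r : Bool) :
    (atLeastTwo p q r).toZMod2 =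
      ((p.toZMod2 + q.toZMod2) * r.toZMod2 + 1) * (p.toZMod2 * q.toZMod2 + 1) + 1 := by
  cases p <;> cases q <;> cases r <;> decide

end Bool

open BitVec

theorem natBit_eq_toZMod2_getLsbD {w i : ℕ} (hi : i < w) (n : ℕ) :
    natBit n i = ((BitVec.ofNat w n).getLsbD i).toZMod2 := by
  rw [natBit, Bool.toZMod2, getLsbD_ofNat, decide_eq_true hi, Bool.true_and]

theorem decompCarry_eq_toZMod2_carry {w i : ℕ} (hi : i < w) (a b : ℕ) :
    decompCarry a b i = (carry (i + 1) (BitVec.ofNat w a) (BitVec.ofNat w b) false).toZMod2 := by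
  induction i with
  | zero =>
    rw [decompCarry, carry_succ, carry_zero, Bool.atLeastTwo_false_right, Bool.toZMod2_and,
      natBit_eq_toZMod2_getLsbD hi, natBit_eq_toZMod2_getLsbD hi]
  | succ i ih =>
    rw [decompCarry, ih (by omega), carry_succ (i + 1), Bool.toZMod2_atLeastTwo,
      natBit_eq_toZMod2_getLsbD hi, natBit_eq_toZMod2_getLsbD hi]

theorem decompBit_eq_toZMod2_getLsbD_add {w i : ℕ} (hi : i < w) (a b : ℕ) :
    decompBit a b i = ((BitVec.ofNat w a + BitVec.ofNat w b).getLsbD i).toZMod2 := by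
  rw [getLsbD_add hi, Bool.toZMod2_xor, Bool.toZMod2_xor, ← add_assoc,
    ← natBit_eq_toZMod2_getLsbD hi, ← natBit_eq_toZMod2_getLsbD hi]
  cases i with
  | zero => rw [decompBit, carry_zero, Bool.toZMod2_false, add_zero]
  | succ i => rw [decompBit, decompCarry_eq_toZMod2_carry (w := w) (by omega)]

theorem bit_decomposition_correct_general (ℓ : ℕ)
    (a b : ℕ) :
    ∀ i, i < ℓ → decompBit a b i = natBit ((a + b) % 2 ^ ℓ) i := by
  intro i hi
  rw [decompBit_eq_toZMod2_getLsbD_add hi, ofNat_add_ofNat, getLsbD, toNat_ofNat]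
  rfl

/-- Correctness of the secure bit-decomposition protocol `π_Decomp`: for
`a, b < 2^ℓ`, the computed bits `x_i` are exactly the binary digits of
`(a + b) mod 2^ℓ`, i.e., of the value shared by Alice and Bob. -/
theorem bit_decomposition_correct (ℓ : ℕ) (hℓ : 1 ≤ ℓ)
    (a b : ℕ) (ha : a < 2 ^ ℓ) (hb : b < 2 ^ ℓ) :
    ∀ i, i < ℓ → decompBit a b i = natBit ((a + b) % 2 ^ ℓ) i :=
  bit_decomposition_correct_general ℓ a b
end

section
/- Let $\ell \geq 1$ and let $a, b < 2^{\ell}$ be natural numbers with bits $a_i, b_i \in \mathbb{Z}/2\mathbb{Z}$. Define the carries $c_0 = a_0 b_0$ and $c_i = (\,(a_i + b_i)c_{i-1} + 1\,)(a_i b_i + 1) + 1$ in $\mathbb{Z}/2\mathbb{Z}$ for $1 \le i < \ell$. Then for every $i < \ell$, $c_i = 1$ if and only if $(a \bmod 2^{i+1}) + (b \bmod 2^{i+1}) \geq 2^{i+1}$; that is, $c_i$ is exactly the carry out of position $i$ in the binary addition of $a$ and $b$. -/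
theorem natBit_eq_cast (n i : ℕ) : natBit n i = ((n / 2 ^ i % 2 : ℕ) : ZMod 2) := by
  rw [natBit, Nat.testBit_eq_decide_div_mod_eq]
  rcases Nat.mod_two_eq_zero_or_one (n / 2 ^ i) with h | h <;> simp [h]

/-- The carry into position `n` (out of position `n - 1`) of the binary addition of `a` and `b`;
the protocol's `c_i` is `addCarry a b (i + 1)`. -/
def addCarry (a b n : ℕ) : ℕ := (a % 2 ^ n + b % 2 ^ n) / 2 ^ n

@[simp]
theorem addCarry_zero (a b : ℕ) : addCarry a b 0 = 0 := by
  simp [addCarry, Nat.mod_one]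

theorem addCarry_lt_two (a b n : ℕ) : addCarry a b n < 2 := by
  have ha := Nat.mod_lt a (Nat.two_pow_pos n)
  have hb := Nat.mod_lt b (Nat.two_pow_pos n)
  rw [addCarry, Nat.div_lt_iff_lt_mul (Nat.two_pow_pos n)]
  omega

theorem addCarry_eq_one_iff (a b n : ℕ) :
    addCarry a b n = 1 ↔ 2 ^ n ≤ a % 2 ^ n + b % 2 ^ n := by
  have hle := Nat.le_div_iff_mul_le (x := 1) (y := a % 2 ^ n + b % 2 ^ n) (Nat.two_pow_pos n)
  have hlt := addCarry_lt_two a b n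
  rw [one_mul] at hle
  rw [addCarry] at hlt ⊢
  omega

theorem addCarry_succ (a b n : ℕ) :
    addCarry a b (n + 1) = (a / 2 ^ n % 2 + b / 2 ^ n % 2 + addCarry a b n) / 2 := by
  have hsum : a % 2 ^ (n + 1) + b % 2 ^ (n + 1)
      = (a % 2 ^ n + b % 2 ^ n) + 2 ^ n * (a / 2 ^ n % 2 + b / 2 ^ n % 2) := by
    rw [Nat.mod_pow_succ, Nat.mod_pow_succ (x := b)]
    ring
  rw [addCarry, addCarry, hsum, pow_succ, ← Nat.div_div_eq_div_mul,
    Nat.add_mul_div_left _ _ (Nat.two_pow_pos n), add_comm]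

theorem zmod_two_carry_update (x y c : ZMod 2) :
    ((x + y) * c + 1) * (x * y + 1) + 1 = x * y + (x + y) * c := by
  revert x y c
  decide

theorem natCast_add_add_div_two {x y c : ℕ} (hx : x < 2) (hy : y < 2) (hc : c < 2) :
    (((x + y + c) / 2 : ℕ) : ZMod 2) = x * y + (x + y) * c := by
  interval_cases x <;> interval_cases y <;> interval_cases c <;> decide

theorem decompCarry_eq_addCarry (a b i : ℕ) :
    decompCarry a b i = (addCarry a b (i + 1) : ZMod 2) := by
  have hdigit (n j : ℕ) : n / 2 ^ j % 2 < 2 := Nat.mod_lt _ two_pos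
  induction i with
  | zero =>
    rw [decompCarry, natBit_eq_cast, natBit_eq_cast, addCarry_succ, addCarry_zero,
      natCast_add_add_div_two (hdigit a 0) (hdigit b 0) two_pos]
    ring
  | succ i ih =>
    rw [decompCarry, zmod_two_carry_update, natBit_eq_cast, natBit_eq_cast, ih,
      addCarry_succ a b (i + 1),
      natCast_add_add_div_two (hdigit a _) (hdigit b _) (addCarry_lt_two a b _)]

theorem bit_decomposition_carry_correct_general (ℓ : ℕ)
    (a b : ℕ) :
    ∀ i, i < ℓ →
      (decompCarry a b i = 1 ↔ 2 ^ (i + 1) ≤ a % 2 ^ (i + 1) + b % 2 ^ (i + 1)) := by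
  intro i _
  rw [decompCarry_eq_addCarry, ← addCarry_eq_one_iff]
  have := addCarry_lt_two a b (i + 1)
  interval_cases addCarry a b (i + 1) <;> decide

/-- The carries computed by the bit-decomposition protocol `π_Decomp` are
exactly the carries of the binary addition of `a` and `b`: for `i < ℓ`,
`c_i = 1` iff `(a mod 2^(i+1)) + (b mod 2^(i+1)) ≥ 2^(i+1)`. -/
theorem bit_decomposition_carry_correct (ℓ : ℕ) (hℓ : 1 ≤ ℓ)
    (a b : ℕ) (ha : a < 2 ^ ℓ) (hb : b < 2 ^ ℓ) :
    ∀ i, i < ℓ →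
      (decompCarry a b i = 1 ↔ 2 ^ (i + 1) ≤ a % 2 ^ (i + 1) + b % 2 ^ (i + 1)) :=
  bit_decomposition_carry_correct_general ℓ a b
end

section
/- Let $\ell \geq 1$, let $z, b < 2^{\ell}$ be natural numbers, and let $z_A, z_B \in \mathbb{Z}/2^{\ell}\mathbb{Z}$ satisfy $z_A + z_B = z$ in $\mathbb{Z}/2^{\ell}\mathbb{Z}$. Let $x_0, \dots, x_{\ell-1} \in \mathbb{Z}/2\mathbb{Z}$ be the outputs of the bit-decomposition recursion applied to the binary digits of the natural-number representatives of $z_A$ and $z_B$ (carries $c_0 = a_0 b_0$, $c_i = ((a_i+b_i)c_{i-1}+1)(a_i b_i + 1)+1$, outputs $x_0 = a_0 + b_0$, $x_i = a_i + b_i + c_{i-1}$), and let $\beta_0,\dots,\beta_{\ell-1} \in \mathbb{Z}/2\mathbb{Z}$ be the binary digits of $b$. Then the comparison output $w = 1 + \sum_{i=0}^{\ell-1} \beta_i(1 - x_i) \prod_{j=i+1}^{\ell-1}(x_j + \beta_j + 1)$, computed in $\mathbb{Z}/2\mathbb{Z}$, satisfies $w = 1$ if and only if $z \geq b$. (This is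 the correctness of the composed privacy-preserving SVM pipeline: bit-decomposing the shared inner-product value and then running the secure comparison against the threshold yields $\mathsf{sign}(z - b)$, i.e., the SVM classification outcome.) -/
-- The carry update of `π_Decomp` is the majority function `Bool.atLeastTwo` written in `ℤ/2ℤ`.
theorem decompCarry_eq_carry {w a b j : ℕ} (hj : j < w) :
    decompCarry a b j =
      if BitVec.carry (j + 1) (BitVec.ofNat w a) (BitVec.ofNat w b) false then 1 else 0 := by
  induction j with
  | zero =>
    simp only [decompCarry, BitVec.carry_succ, BitVec.carry_zero, natBit, BitVec.getLsbD_ofNat, hj,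
      decide_true, Bool.true_and]
    cases a.testBit 0 <;> cases b.testBit 0 <;> decide
  | succ j ih =>
    rw [decompCarry, ih (by omega), BitVec.carry_succ (j + 1)]
    simp only [natBit, BitVec.getLsbD_ofNat, hj, decide_true, Bool.true_and]
    cases a.testBit (j + 1) <;> cases b.testBit (j + 1) <;>
      cases BitVec.carry (j + 1) (BitVec.ofNat w a) (BitVec.ofNat w b) false <;> decide

theorem decompBit_eq_natBit_add (a b i : ℕ) : decompBit a b i = natBit (a + b) i := by
  have h :=
    BitVec.getLsbD_add (Nat.lt_succ_self i) (BitVec.ofNat (i + 1) a) (BitVec.ofNat (i + 1) b)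
  rw [← BitVec.ofNat_add] at h
  simp only [BitVec.getLsbD_ofNat, Nat.lt_succ_self, decide_true, Bool.true_and] at h
  cases i with
  | zero =>
    simp only [decompBit, natBit, h, BitVec.carry_zero]
    cases a.testBit 0 <;> cases b.testBit 0 <;> decide
  | succ i =>
    rw [decompBit, decompCarry_eq_carry (w := i + 1 + 1) (by omega)]
    simp only [natBit, h]
    cases a.testBit (i + 1) <;> cases b.testBit (i + 1) <;>
      cases BitVec.carry (i + 1) (BitVec.ofNat (i + 1 + 1) a) (BitVec.ofNat (i + 1 + 1) b) false <;>
      decide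

theorem mod_two_pow_succ_lt_mod_two_pow_succ_iff {z b n : ℕ} :
    z % 2 ^ (n + 1) < b % 2 ^ (n + 1) ↔
      z.testBit n = b.testBit n ∧ z % 2 ^ n < b % 2 ^ n ∨
        b.testBit n = true ∧ z.testBit n = false := by
  rw [Nat.mod_pow_succ, Nat.mod_pow_succ, ← Nat.toNat_testBit, ← Nat.toNat_testBit]
  have hz := Nat.mod_lt z (Nat.two_pow_pos n)
  have hb := Nat.mod_lt b (Nat.two_pow_pos n)
  cases z.testBit n <;> cases b.testBit n <;> simp <;> omega

def comparisonSum {R : Type*} [CommRing R] (x β : ℕ → R) (n : ℕ) : R :=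
  ∑ i ∈ Finset.range n, β i * (1 - x i) * ∏ j ∈ Finset.Ico (i + 1) n, (x j + β j + 1)

theorem comparisonSum_succ {R : Type*} [CommRing R] (x β : ℕ → R) (n : ℕ) :
    comparisonSum x β (n + 1) = comparisonSum x β n * (x n + β n + 1) + β n * (1 - x n) := by
  rw [comparisonSum, Finset.sum_range_succ, Finset.Ico_self, Finset.prod_empty, mul_one,
    comparisonSum, Finset.sum_mul]
  congr 1
  refine Finset.sum_congr rfl fun i hi => ?_
  rw [Finset.prod_Ico_succ_top (Finset.mem_range.mp hi), ← mul_assoc]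

theorem comparisonSum_eq_ite_mod_lt {x β : ℕ → ZMod 2} {z b : ℕ} (n : ℕ)
    (hx : ∀ i < n, x i = natBit z i) (hβ : ∀ i < n, β i = natBit b i) :
    comparisonSum x β n = if z % 2 ^ n < b % 2 ^ n then 1 else 0 := by
  induction n with
  | zero => simp [comparisonSum, Nat.mod_one]
  | succ n ih =>
    rw [comparisonSum_succ, ih (fun i hi => hx i (by omega)) (fun i hi => hβ i (by omega)),
      hx n (by omega), hβ n (by omega)]
    simp only [mod_two_pow_succ_lt_mod_two_pow_succ_iff, natBit]
    by_cases h : z % 2 ^ n < b % 2 ^ n <;> cases z.testBit n <;> cases b.testBit n <;>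
      simp [h] <;> decide

theorem natBit_mod_two_pow_of_lt {n i ℓ : ℕ} (hi : i < ℓ) :
    natBit (n % 2 ^ ℓ) i = natBit n i := by
  simp [natBit, Nat.testBit_mod_two_pow, hi]

theorem privacy_preserving_svm_pipeline_correct_general (ℓ : ℕ)
    (z b : ℕ) (hz : z < 2 ^ ℓ) (hb : b < 2 ^ ℓ)
    (zA zB : ZMod (2 ^ ℓ)) (hshare : zA + zB = (z : ZMod (2 ^ ℓ)))
    (x : ℕ → ZMod 2) (hx : ∀ i, x i = decompBit zA.val zB.val i)
    (β : ℕ → ZMod 2) (hβ : ∀ i, β i = natBit b i)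
    (w : ZMod 2)
    (hw : w = 1 + ∑ i ∈ Finset.range ℓ,
        β i * (1 - x i) * ∏ j ∈ Finset.Ico (i + 1) ℓ, (x j + β j + 1)) :
    w = 1 ↔ b ≤ z := by
  have hsum : (zA.val + zB.val) % 2 ^ ℓ = z := by
    rw [← ZMod.val_add, hshare, ZMod.val_natCast, Nat.mod_eq_of_lt hz]
  have hxz : ∀ i < ℓ, x i = natBit z i := fun i hi => by
    rw [hx, decompBit_eq_natBit_add, ← hsum, natBit_mod_two_pow_of_lt hi]
  rw [hw, ← comparisonSum, comparisonSum_eq_ite_mod_lt ℓ hxz (fun i _ => hβ i),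
    Nat.mod_eq_of_lt hz, Nat.mod_eq_of_lt hb]
  split_ifs with h
  · exact iff_of_false (by decide) (not_le.mpr h)
  · exact iff_of_true (add_zero 1) (not_lt.mp h)

/-- Correctness of the composed privacy-preserving SVM pipeline: bit-decompose
the additive sharing `(z_A, z_B)` of the inner-product value `z` over
`ℤ/2^ℓℤ` into bits `x_i`, then run the secure comparison against the bits
`β_i` of the threshold `b`; the output
`w = 1 + ∑_{i<ℓ} β_i (1 - x_i) ∏_{j=i+1}^{ℓ-1} (x_j + β_j + 1)` satisfies
`w = 1` iff `z ≥ b`, i.e., it is the SVM classification outcome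
`sign(z - b)`. -/
theorem privacy_preserving_svm_pipeline_correct (ℓ : ℕ) (hℓ : 1 ≤ ℓ)
    (z b : ℕ) (hz : z < 2 ^ ℓ) (hb : b < 2 ^ ℓ)
    (zA zB : ZMod (2 ^ ℓ)) (hshare : zA + zB = (z : ZMod (2 ^ ℓ)))
    (x : ℕ → ZMod 2) (hx : ∀ i, x i = decompBit zA.val zB.val i)
    (β : ℕ → ZMod 2) (hβ : ∀ i, β i = natBit b i)
    (w : ZMod 2)
    (hw : w = 1 + ∑ i ∈ Finset.range ℓ,
        β i * (1 - x i) * ∏ j ∈ Finset.Ico (i + 1) ℓ, (x j + β j + 1)) :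
    w = 1 ↔ b ≤ z :=
  privacy_preserving_svm_pipeline_correct_general ℓ z b hz hb zA zB hshare x hx β hβ w hw
end
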